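/- For $L > 0$ and $K(x) = \frac{1}{2}\int_0^{\pi/2} \tan\psi\, e^{-|x|/\cos\psi}\, d\psi$, one has $\sup_{x \in [0,L]} \int_0^L K(x - \xi)\, d\xi < 1$. -/

import Mathlib

/-! Integrating over the slab first (Fubini), direction `ψ` with `c = cos ψ` contributes
`tan ψ / 2 · c (2 - e^{-x/c} - e^{-(L-x)/c})`, and by AM–GM
`e^{-x/c} + e^{-(L-x)/c} ≥ 2 e^{-L/(2c)}` uniformly in `x ∈ [0, L]`.
Since `∫₀^{π/2} sin = 1`, the mass is at most `1 - ∫₀^{π/2} sin ψ e^{-L/(2 cos ψ)} dψ`,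
and this last integral is positive. -/

open Real MeasureTheory Set

@[fun_prop]
lemma Real.measurable_tan : Measurable tan := by
  rw [show tan = fun x => sin x / cos x from funext tan_eq_sin_div_cos]
  fun_prop

lemma two_mul_exp_add_div_two_le (a b : ℝ) : 2 * exp ((a + b) / 2) ≤ exp a + exp b :=
  calc 2 * exp ((a + b) / 2) = 2 * exp (a / 2) * exp (b / 2) := by
        rw [mul_assoc, ← exp_add, add_div]
    _ ≤ exp (a / 2) ^ 2 + exp (b / 2) ^ 2 := two_mul_le_add_sq _ _
    _ = exp a + exp b := by rw [← exp_nat_mul, ← exp_nat_mul]; ring_nf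

section Slab

variable {x L c ψ : ℝ}

lemma integral_exp_neg_abs_sub_div (hc : 0 < c) (hx : x ∈ Icc 0 L) :
    ∫ ξ in (0:ℝ)..L, exp (-|x - ξ| / c) = c * (2 - exp (-x / c) - exp (-(L - x) / c)) := by
  have hint (a b : ℝ) : IntervalIntegrable (fun ξ => exp (-|x - ξ| / c)) volume a b :=
    (by fun_prop : Continuous fun ξ => exp (-|x - ξ| / c)).intervalIntegrable a b
  have hleft :
      ∫ ξ in (0:ℝ)..x, exp (-|x - ξ| / c) = ∫ ξ in (0:ℝ)..x, exp (ξ / c - x / c) := by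
    refine intervalIntegral.integral_congr fun ξ hξ => ?_
    rw [uIcc_of_le hx.1] at hξ
    simp only [abs_of_nonneg (sub_nonneg.2 hξ.2)]
    ring_nf
  have hright : ∫ ξ in x..L, exp (-|x - ξ| / c) = ∫ ξ in x..L, exp (x / c - ξ / c) := by
    refine intervalIntegral.integral_congr fun ξ hξ => ?_
    rw [uIcc_of_le hx.2] at hξ
    simp only [abs_of_nonpos (sub_nonpos.2 hξ.1)]
    ring_nf
  rw [← intervalIntegral.integral_add_adjacent_intervals (hint 0 x) (hint x L), hleft, hright,
    intervalIntegral.integral_comp_div_sub _ hc.ne',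
    intervalIntegral.integral_comp_sub_div _ hc.ne', integral_exp, integral_exp]
  simp only [smul_eq_mul, sub_self, exp_zero]
  ring_nf

lemma integral_exp_neg_abs_sub_div_le (hc : 0 < c) (hx : x ∈ Icc 0 L) :
    ∫ ξ in (0:ℝ)..L, exp (-|x - ξ| / c) ≤ 2 * c * (1 - exp (-L / (2 * c))) := by
  have h := two_mul_exp_add_div_two_le (-x / c) (-(L - x) / c)
  rw [show (-x / c + -(L - x) / c) / 2 = -L / (2 * c) by field_simp; ring] at h
  rw [integral_exp_neg_abs_sub_div hc hx]
  linarith [mul_le_mul_of_nonneg_left h hc.le]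

lemma setIntegral_tan_mul_exp_le (hx : x ∈ Icc 0 L) (hψ : ψ ∈ Ioc 0 (π / 2)) :
    ∫ ξ in Ioc 0 L, tan ψ * exp (-|x - ξ| / cos ψ)
      ≤ 2 * (sin ψ - sin ψ * exp (-L / (2 * cos ψ))) := by
  obtain hπ | hψπ := hψ.2.eq_or_lt
  -- At `ψ = π / 2` both sides vanish, since `tan (π / 2) = 0` and `-L / 0 = 0` in Lean.
  · simp [hπ]
  have hcos : 0 < cos ψ := cos_pos_of_mem_Ioo ⟨by linarith [hψ.1], hψπ⟩
  rw [integral_const_mul, ← intervalIntegral.integral_of_le (hx.1.trans hx.2)]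
  calc tan ψ * ∫ ξ in (0:ℝ)..L, exp (-|x - ξ| / cos ψ)
      ≤ tan ψ * (2 * cos ψ * (1 - exp (-L / (2 * cos ψ)))) :=
        mul_le_mul_of_nonneg_left (integral_exp_neg_abs_sub_div_le hcos hx)
          (tan_nonneg_of_nonneg_of_le_pi_div_two hψ.1.le hψ.2)
    _ = 2 * (sin ψ - sin ψ * exp (-L / (2 * cos ψ))) := by
        rw [tan_eq_sin_div_cos]
        field_simp

lemma integrable_tan_mul_exp_prod (hx : x ∈ Icc 0 L) :
    Integrable (Function.uncurry fun ξ ψ => tan ψ * exp (-|x - ξ| / cos ψ))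
      ((volume.restrict (Ioc 0 L)).prod (volume.restrict (Ioc 0 (π / 2)))) := by
  have hmeas :
      Measurable (Function.uncurry fun ξ ψ : ℝ => tan ψ * exp (-|x - ξ| / cos ψ)) := by
    fun_prop
  refine (integrable_prod_iff' hmeas.aestronglyMeasurable).2 ⟨?_, ?_⟩
  · exact .of_forall fun ψ =>
      (by fun_prop : Continuous fun ξ => tan ψ * exp (-|x - ξ| / cos ψ)).integrableOn_Ioc
  refine (integrable_const 2).mono'
    hmeas.norm.stronglyMeasurable.integral_prod_left'.aestronglyMeasurable ?_
  filter_upwards [ae_restrict_mem measurableSet_Ioc] with ψ hψ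
  have htan : 0 ≤ tan ψ := tan_nonneg_of_nonneg_of_le_pi_div_two hψ.1.le hψ.2
  have hsin : 0 ≤ sin ψ := sin_nonneg_of_nonneg_of_le_pi hψ.1.le (by linarith [pi_pos, hψ.2])
  simp only [Function.uncurry_apply_pair, norm_mul, norm_of_nonneg htan,
    norm_of_nonneg (exp_pos _).le]
  rw [norm_of_nonneg (integral_nonneg fun ξ => by positivity)]
  linarith [setIntegral_tan_mul_exp_le hx hψ, sin_le_one ψ,
    mul_nonneg hsin (exp_pos (-L / (2 * cos ψ))).le]

lemma intervalIntegrable_sin_mul_exp (hL : 0 ≤ L) :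
    IntervalIntegrable (fun ψ => sin ψ * exp (-L / (2 * cos ψ))) volume 0 (π / 2) := by
  refine (continuous_sin.intervalIntegrable 0 (π / 2)).mono_fun ?_ ?_
  · exact (by fun_prop : Measurable fun ψ => sin ψ * exp (-L / (2 * cos ψ)))
      |>.aestronglyMeasurable
  rw [uIoc_of_le pi_div_two_pos.le]
  filter_upwards [ae_restrict_mem measurableSet_Ioc] with ψ hψ
  have hcos : 0 ≤ cos ψ := cos_nonneg_of_mem_Icc ⟨by linarith [pi_pos, hψ.1], hψ.2⟩
  rw [norm_mul, norm_of_nonneg (exp_pos _).le]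
  exact mul_le_of_le_one_right (norm_nonneg _)
    (exp_le_one_iff.2 (div_nonpos_of_nonpos_of_nonneg (neg_nonpos.2 hL) (by positivity)))

lemma integral_sin_mul_exp_pos (hL : 0 ≤ L) :
    0 < ∫ ψ in (0:ℝ)..(π / 2), sin ψ * exp (-L / (2 * cos ψ)) :=
  intervalIntegral.intervalIntegral_pos_of_pos_on (intervalIntegrable_sin_mul_exp hL)
    (fun ψ hψ =>
      mul_pos (sin_pos_of_pos_of_lt_pi hψ.1 (by linarith [hψ.2, pi_pos])) (exp_pos _))
    pi_div_two_pos

lemma integral_slab_kernel_le (hx : x ∈ Icc 0 L) :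
    ∫ ξ in (0:ℝ)..L, (1 / 2) * ∫ ψ in (0:ℝ)..(π / 2), tan ψ * exp (-|x - ξ| / cos ψ)
      ≤ 1 - ∫ ψ in (0:ℝ)..(π / 2), sin ψ * exp (-L / (2 * cos ψ)) := by
  have hL : 0 ≤ L := hx.1.trans hx.2
  have hfg := integrable_tan_mul_exp_prod hx
  have hg := intervalIntegrable_sin_mul_exp hL
  calc
    _ = (1 / 2) *
          ∫ ψ in Ioc 0 (π / 2), ∫ ξ in Ioc 0 L, tan ψ * exp (-|x - ξ| / cos ψ) := by
        rw [intervalIntegral.integral_const_mul, intervalIntegral.integral_of_le hL]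
        simp only [intervalIntegral.integral_of_le pi_div_two_pos.le]
        rw [integral_integral_swap hfg]
    _ ≤ (1 / 2) * ∫ ψ in Ioc 0 (π / 2), 2 * (sin ψ - sin ψ * exp (-L / (2 * cos ψ))) := by
        refine mul_le_mul_of_nonneg_left (setIntegral_mono_on hfg.integral_prod_right ?_
          measurableSet_Ioc fun ψ hψ => setIntegral_tan_mul_exp_le hx hψ) (by norm_num)
        exact ((continuous_sin.intervalIntegrable _ _).sub hg |>.const_mul 2).1
    _ = 1 - ∫ ψ in (0:ℝ)..(π / 2), sin ψ * exp (-L / (2 * cos ψ)) := by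
        rw [← intervalIntegral.integral_of_le pi_div_two_pos.le,
          intervalIntegral.integral_const_mul,
          intervalIntegral.integral_sub (continuous_sin.intervalIntegrable _ _) hg, integral_sin]
        simp only [cos_pi_div_two, cos_zero]
        ring

end Slab

theorem slab_kernel_mass_loss
    (L : ℝ) (hL : 0 < L)
    (K : ℝ → ℝ)
    (hK : K = fun x => (1/2) * ∫ ψ in (0:ℝ)..(π/2), Real.tan ψ * Real.exp (-|x| / Real.cos ψ)) :
    (⨆ x : Icc (0:ℝ) L, ∫ ξ in (0:ℝ)..L, K ((x : ℝ) - ξ)) < 1 := by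
  have : Nonempty (Icc 0 L) := ⟨⟨0, le_rfl, hL.le⟩⟩
  subst hK
  calc _ ≤ 1 - ∫ ψ in (0:ℝ)..(π / 2), sin ψ * exp (-L / (2 * cos ψ)) :=
        ciSup_le fun x => integral_slab_kernel_le x.2
    _ < 1 := sub_lt_self _ (integral_sin_mul_exp_pos hL.le)
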